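/- Let E ∈ ℝ² with E ≠ 0, let R, X ∈ ℝ, and let Imax > 0. Define P(x) := (3/2)R‖x‖² + (3/2)⟨E,x⟩ and Q(x) := (3/2)X‖x‖² + (3/2)⟨JE,x⟩ for x ∈ ℝ². Then the image set { (P(x), Q(x)) : x ∈ ℝ², ‖x‖ ≤ Imax } is a convex subset of ℝ². -/

import Mathlib

open scoped RealInnerProductSpace

/-- The matrix `J` with rows `(0,1)` and `(-1,0)`. -/
def Jmat : Matrix (Fin 2) (Fin 2) ℝ := !![0, 1; -1, 0]

/-- Interpret a plain vector `Fin 2 → ℝ` as an element of Euclidean space `ℝ²`. -/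
noncomputable def toE (v : Fin 2 → ℝ) : EuclideanSpace ℝ (Fin 2) := WithLp.toLp 2 v

/-- The vector `J E ∈ ℝ²`. -/
noncomputable def Jv (E : EuclideanSpace ℝ (Fin 2)) : EuclideanSpace ℝ (Fin 2) :=
  toE (Jmat.mulVec (fun i => E i))

/-!
In the complex coordinate `u = x₀ - i x₁` the output `(P, Q)` is `3/2 • (‖u‖² • c + e * u)` with
`c = R + i X` and `e = E₀ + i E₁`. The image of the disc `‖u‖ ≤ Imax` is the union over
`r ∈ [0, Imax]` of the closed discs of radius `‖e‖ r` centred at `r² • c`: a point of such a disc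
lies, by the intermediate value theorem, on the circle of radius `‖e‖ s` around `s² • c` for some
`s ≤ r`, and that circle is the image of `‖u‖ = s`. The union is convex, because a convex
combination of points of the discs for `r₁` and `r₂` lies in the disc for `√(a r₁² + b r₂²)`:
the centre is affine in `r²` while the radius is concave in it.
-/

open Set Metric

theorem convex_biUnion_closedBall_sq_smul {F : Type*} [NormedAddCommGroup F] [NormedSpace ℝ F]
    (c : F) {k : ℝ} (hk : 0 ≤ k) (ρ : ℝ) :
    Convex ℝ (⋃ r ∈ Icc 0 ρ, closedBall (r ^ 2 • c) (k * r)) := by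
  intro w₁ hw₁ w₂ hw₂ a b ha hb hab
  simp only [mem_iUnion₂, mem_closedBall, dist_eq_norm, mem_Icc] at hw₁ hw₂ ⊢
  obtain ⟨r₁, ⟨hr₁, hr₁ρ⟩, hw₁⟩ := hw₁
  obtain ⟨r₂, ⟨hr₂, hr₂ρ⟩, hw₂⟩ := hw₂
  have hmean : 0 ≤ a * r₁ ^ 2 + b * r₂ ^ 2 := by positivity
  refine ⟨√(a * r₁ ^ 2 + b * r₂ ^ 2), ⟨Real.sqrt_nonneg _, ?_⟩, ?_⟩
  · rw [Real.sqrt_le_left (hr₁.trans hr₁ρ)]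
    nlinarith [mul_le_mul_of_nonneg_left (pow_le_pow_left₀ hr₁ hr₁ρ 2) ha,
      mul_le_mul_of_nonneg_left (pow_le_pow_left₀ hr₂ hr₂ρ 2) hb]
  have hradius : a * r₁ + b * r₂ ≤ √(a * r₁ ^ 2 + b * r₂ ^ 2) := by
    rw [Real.le_sqrt (by positivity) hmean]
    nlinarith [mul_nonneg (mul_nonneg ha hb) (sq_nonneg (r₁ - r₂))]
  have hcentre : a • w₁ + b • w₂ - √(a * r₁ ^ 2 + b * r₂ ^ 2) ^ 2 • c =
      a • (w₁ - r₁ ^ 2 • c) + b • (w₂ - r₂ ^ 2 • c) := by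
    rw [Real.sq_sqrt hmean, add_smul, mul_smul, mul_smul, smul_sub, smul_sub]
    abel
  calc ‖a • w₁ + b • w₂ - √(a * r₁ ^ 2 + b * r₂ ^ 2) ^ 2 • c‖
      ≤ a * ‖w₁ - r₁ ^ 2 • c‖ + b * ‖w₂ - r₂ ^ 2 • c‖ := by
        rw [hcentre]
        refine (norm_add_le _ _).trans_eq ?_
        rw [norm_smul_of_nonneg ha, norm_smul_of_nonneg hb]
    _ ≤ a * (k * r₁) + b * (k * r₂) := by gcongr
    _ = k * (a * r₁ + b * r₂) := by ring
    _ ≤ k * √(a * r₁ ^ 2 + b * r₂ ^ 2) := by gcongr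

section RCLike

variable {𝕜 : Type*} [RCLike 𝕜]

theorem RCLike.exists_norm_eq_and_mul_eq {e v : 𝕜} {s : ℝ} (hs : 0 ≤ s) (h : ‖v‖ = ‖e‖ * s) :
    ∃ u : 𝕜, ‖u‖ = s ∧ e * u = v := by
  rcases eq_or_ne e 0 with rfl | he
  · refine ⟨s, by simp [abs_of_nonneg hs], ?_⟩
    simp_all
  · refine ⟨v / e, ?_, mul_div_cancel₀ v he⟩
    rw [norm_div, h, mul_div_cancel_left₀ s (norm_ne_zero_iff.mpr he)]

theorem RCLike.image_closedBall_norm_sq_smul_add_mul (c e : 𝕜) (ρ : ℝ) :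
    (fun u : 𝕜 => ‖u‖ ^ 2 • c + e * u) '' closedBall 0 ρ =
      ⋃ r ∈ Icc 0 ρ, closedBall (r ^ 2 • c) (‖e‖ * r) := by
  ext w
  simp only [mem_image, mem_iUnion₂, mem_closedBall, dist_eq_norm, sub_zero, mem_Icc]
  constructor
  · rintro ⟨u, hu, rfl⟩
    exact ⟨‖u‖, ⟨norm_nonneg u, hu⟩, by simp⟩
  · rintro ⟨r, ⟨hr, hrρ⟩, hw⟩
    obtain ⟨s, ⟨hs, hsr⟩, hws⟩ : ∃ s ∈ Icc 0 r, ‖w - s ^ 2 • c‖ - ‖e‖ * s = 0 := by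
      refine intermediate_value_Icc' hr (Continuous.continuousOn (by fun_prop)) ⟨?_, ?_⟩
      · linarith
      · simp
    obtain ⟨u, hus, hu⟩ := RCLike.exists_norm_eq_and_mul_eq hs (sub_eq_zero.mp hws)
    exact ⟨u, hus.trans_le (hsr.trans hrρ), by rw [hus, hu, add_sub_cancel]⟩

end RCLike

/-- The coordinate `x₀ - i x₁`: conjugating makes `⟪J E, x⟫` the imaginary part of
`(E₀ + i E₁) * u`. -/
noncomputable def conjComplexCoord : EuclideanSpace ℝ (Fin 2) ≃ₗᵢ[ℝ] ℂ :=
  Complex.orthonormalBasisOneI.repr.symm.trans Complex.conjLIE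

theorem conjComplexCoord_apply (x : EuclideanSpace ℝ (Fin 2)) :
    conjComplexCoord x = ⟨x 0, -x 1⟩ := by
  apply Complex.ext <;> simp [conjComplexCoord]

theorem powerPair_eq_complex (E x : EuclideanSpace ℝ (Fin 2)) (R X : ℝ) :
    ((3 / 2) * R * ‖x‖ ^ 2 + (3 / 2) * ⟪E, x⟫, (3 / 2) * X * ‖x‖ ^ 2 + (3 / 2) * ⟪Jv E, x⟫) =
      (3 / 2 : ℝ) • Complex.equivRealProd
        (‖conjComplexCoord x‖ ^ 2 • (⟨R, X⟩ : ℂ) + ⟨E 0, E 1⟩ * conjComplexCoord x) := by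
  rw [LinearIsometryEquiv.norm_map, conjComplexCoord_apply]
  simp only [PiLp.inner_apply, Fin.sum_univ_two, Jv, toE, Jmat, Complex.equivRealProd_apply,
    Prod.smul_mk, Complex.add_re, Complex.add_im, Complex.smul_re, Complex.smul_im,
    Complex.mul_re, Complex.mul_im, RCLike.inner_apply, conj_trivial, smul_eq_mul, Prod.mk.injEq,
    Matrix.mulVec, dotProduct, Matrix.of_apply, Matrix.cons_val', Matrix.cons_val_zero,
    Matrix.cons_val_one, Matrix.empty_val', Matrix.cons_val_fin_one]
  constructor <;> ring

theorem stmt2 (E : EuclideanSpace ℝ (Fin 2)) (R X : ℝ)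
    (Imax : ℝ) :
    Convex ℝ {p : ℝ × ℝ | ∃ x : EuclideanSpace ℝ (Fin 2), ‖x‖ ≤ Imax ∧
      p = ((3 / 2) * R * ‖x‖ ^ 2 + (3 / 2) * ⟪E, x⟫,
           (3 / 2) * X * ‖x‖ ^ 2 + (3 / 2) * ⟪Jv E, x⟫)} := by
  set g : ℂ → ℂ := fun u => ‖u‖ ^ 2 • (⟨R, X⟩ : ℂ) + ⟨E 0, E 1⟩ * u
  set L : ℂ →ₗ[ℝ] ℝ × ℝ := (3 / 2 : ℝ) • Complex.equivRealProdLm.toLinearMap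
  have hregion : {p : ℝ × ℝ | ∃ x : EuclideanSpace ℝ (Fin 2), ‖x‖ ≤ Imax ∧
      p = ((3 / 2) * R * ‖x‖ ^ 2 + (3 / 2) * ⟪E, x⟫,
           (3 / 2) * X * ‖x‖ ^ 2 + (3 / 2) * ⟪Jv E, x⟫)} =
      L '' (g '' (conjComplexCoord '' closedBall 0 Imax)) := by
    ext p
    simp [image_image, powerPair_eq_complex, eq_comm, L, g]
  rw [hregion, conjComplexCoord.image_closedBall, map_zero,
    RCLike.image_closedBall_norm_sq_smul_add_mul]
  exact (convex_biUnion_closedBall_sq_smul _ (norm_nonneg _) Imax).linear_image L
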